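/- (Pointwise contraction of representations.) For every function f : ℝ → ℂ, every x ∈ ℝ and every (c, v₁, v₂) ∈ ℝ³, lim_{ε→0⁺} exp(i·a(ε)·(v₂ + ε·(v₁ − c·v₂/2)))·exp(i·b(ε)·v₂·D_ε(c)·exp(−ε·x))·f(c + x) = exp(i·(B·v₂ + A·(v₁ + v₂·x)))·f(c + x). -/

import Mathlib

open MeasureTheory Filter Topology

/-- `D_ε(c) = (exp(−εc) − 1)/(−εc)` for `c ≠ 0`, `D_ε(0) = 1`. -/
noncomputable def Dfun (ε c : ℝ) : ℝ :=
  if c = 0 then 1 else (Real.exp (-(ε * c)) - 1) / (-(ε * c))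

/-!
The two phases add up to the real phase `(a₀ + A/ε)·α(ε) + (b₀ − A/ε)·β(ε)` with
`α(ε) = v₂ + ε(v₁ − c v₂/2)` and `β(ε) = v₂ D_ε(c) e^{−εx}`. This equals
`a₀ α + b₀ β + A (α − β)/ε` with `α, β → v₂`, and the singular term converges because `α − β = O(ε)`:
from `D_ε(c) = 1 − εc/2 + o(ε)` and `e^{−εx} = 1 − εx + o(ε)` one gets
`(α − β)/ε → v₁ − c v₂/2 + v₂ (c/2 + x) = v₁ + v₂ x`.
-/

namespace Real

theorem tendsto_exp_sub_one_div :
    Tendsto (fun t : ℝ => (exp t - 1) / t) (𝓝[≠] 0) (𝓝 1) := by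
  simpa [div_eq_inv_mul] using (hasDerivAt_exp 0).tendsto_slope_zero

theorem tendsto_exp_sub_one_sub_div_sq :
    Tendsto (fun t : ℝ => (exp t - 1 - t) / t ^ 2) (𝓝[≠] 0) (𝓝 (1 / 2)) := by
  have hnum : Tendsto (fun t : ℝ => exp t - 1 - t) (𝓝[≠] 0) (𝓝 0) := by
    have : Continuous fun t : ℝ => exp t - 1 - t := by fun_prop
    simpa using (this.tendsto 0).mono_left nhdsWithin_le_nhds
  have hden : Tendsto (fun t : ℝ => t ^ 2) (𝓝[≠] 0) (𝓝 0) := by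
    simpa using ((continuous_pow 2).tendsto (0 : ℝ)).mono_left nhdsWithin_le_nhds
  have hratio : Tendsto (fun t : ℝ => (exp t - 1) / (2 * t)) (𝓝[≠] 0) (𝓝 (1 / 2)) := by
    refine (tendsto_exp_sub_one_div.div_const 2).congr fun t => ?_
    rw [div_div, mul_comm]
  refine HasDerivAt.lhopital_zero_nhdsNE (f' := fun t => exp t - 1) (g' := fun t => 2 * t)
    ?_ ?_ ?_ hnum hden hratio
  · exact Eventually.of_forall fun t => by
      simpa using ((hasDerivAt_exp t).sub_const 1).fun_sub (hasDerivAt_id t)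
  · exact Eventually.of_forall fun t => by simpa using hasDerivAt_pow 2 t
  · filter_upwards [self_mem_nhdsWithin] with t (ht : t ≠ 0)
    simpa using ht

end Real

theorem tendsto_neg_mul_const_nhdsNE {c : ℝ} (hc : c ≠ 0) :
    Tendsto (fun ε : ℝ => -(ε * c)) (𝓝[≠] 0) (𝓝[≠] 0) := by
  refine tendsto_nhdsWithin_of_tendsto_nhds_of_eventually_within _ ?_ ?_
  · have : Continuous fun ε : ℝ => -(ε * c) := by fun_prop
    simpa using (this.tendsto 0).mono_left nhdsWithin_le_nhds
  · filter_upwards [self_mem_nhdsWithin] with ε (hε : ε ≠ 0)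
    simpa using And.intro hε hc

theorem tendsto_Dfun (c : ℝ) : Tendsto (fun ε : ℝ => Dfun ε c) (𝓝[≠] 0) (𝓝 1) := by
  by_cases hc : c = 0
  · simp [Dfun, hc]
  · simpa [Dfun, hc, Function.comp_def] using
      Real.tendsto_exp_sub_one_div.comp (tendsto_neg_mul_const_nhdsNE hc)

theorem tendsto_one_sub_Dfun_div (c : ℝ) :
    Tendsto (fun ε : ℝ => (1 - Dfun ε c) / ε) (𝓝[≠] 0) (𝓝 (c / 2)) := by
  by_cases hc : c = 0
  · simp [Dfun, hc]
  · have h := (Real.tendsto_exp_sub_one_sub_div_sq.comp (tendsto_neg_mul_const_nhdsNE hc)).const_mul c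
    rw [mul_one_div] at h
    refine h.congr' ?_
    filter_upwards [self_mem_nhdsWithin] with ε (hε : ε ≠ 0)
    simp only [Function.comp_def, Dfun, hc, if_false]
    field_simp
    ring

theorem tendsto_one_sub_exp_neg_mul_div (x : ℝ) :
    Tendsto (fun ε : ℝ => (1 - Real.exp (-(ε * x))) / ε) (𝓝[≠] 0) (𝓝 x) := by
  have hd : HasDerivAt (fun ε : ℝ => Real.exp (-(ε * x))) (-x) 0 := by
    simpa using ((hasDerivAt_id (0 : ℝ)).mul_const x).neg.exp
  refine (hd.tendsto_slope_zero.neg.congr fun ε => ?_).trans (by rw [neg_neg])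
  simp only [zero_add, zero_mul, neg_zero, Real.exp_zero, smul_eq_mul]
  ring

theorem tendsto_one_sub_Dfun_mul_exp_neg_mul_div (c x : ℝ) :
    Tendsto (fun ε : ℝ => (1 - Dfun ε c * Real.exp (-(ε * x))) / ε) (𝓝[≠] 0)
      (𝓝 (c / 2 + x)) := by
  have h := (tendsto_one_sub_Dfun_div c).add
    ((tendsto_Dfun c).mul (tendsto_one_sub_exp_neg_mul_div x))
  rw [one_mul] at h
  exact h.congr fun ε => by ring

theorem tendsto_add_div_mul_add_sub_div_mul {l : Filter ℝ} (hl : ∀ᶠ ε in l, ε ≠ 0)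
    {α β : ℝ → ℝ} {p q L : ℝ} (hα : Tendsto α l (𝓝 p)) (hβ : Tendsto β l (𝓝 q))
    (hαβ : Tendsto (fun ε => (α ε - β ε) / ε) l (𝓝 L)) (a b A : ℝ) :
    Tendsto (fun ε => (a + A / ε) * α ε + (b - A / ε) * β ε) l
      (𝓝 (a * p + b * q + A * L)) := by
  refine (((hα.const_mul a).add (hβ.const_mul b)).add (hαβ.const_mul A)).congr' ?_
  filter_upwards [hl] with ε hε
  field_simp
  ring

theorem tendsto_contraction_phase (A a₀ b₀ x c v₁ v₂ : ℝ) :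
    Tendsto (fun ε : ℝ => (a₀ + A / ε) * (v₂ + ε * (v₁ - c * v₂ / 2)) +
        (b₀ - A / ε) * (v₂ * Dfun ε c * Real.exp (-(ε * x))))
      (𝓝[≠] 0) (𝓝 ((a₀ + b₀) * v₂ + A * (v₁ + v₂ * x))) := by
  have hα : Tendsto (fun ε : ℝ => v₂ + ε * (v₁ - c * v₂ / 2)) (𝓝[≠] 0) (𝓝 v₂) := by
    have : Continuous fun ε : ℝ => v₂ + ε * (v₁ - c * v₂ / 2) := by fun_prop
    simpa using (this.tendsto 0).mono_left nhdsWithin_le_nhds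
  have hexp : Tendsto (fun ε : ℝ => Real.exp (-(ε * x))) (𝓝[≠] 0) (𝓝 1) := by
    have : Continuous fun ε : ℝ => Real.exp (-(ε * x)) := by fun_prop
    simpa using (this.tendsto 0).mono_left nhdsWithin_le_nhds
  have hβ : Tendsto (fun ε : ℝ => v₂ * Dfun ε c * Real.exp (-(ε * x))) (𝓝[≠] 0) (𝓝 v₂) := by
    simpa using ((tendsto_Dfun c).const_mul v₂).mul hexp
  have hαβ : Tendsto
      (fun ε : ℝ => (v₂ + ε * (v₁ - c * v₂ / 2) - v₂ * Dfun ε c * Real.exp (-(ε * x))) / ε)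
      (𝓝[≠] 0) (𝓝 (v₁ + v₂ * x)) := by
    have h := ((tendsto_one_sub_Dfun_mul_exp_neg_mul_div c x).const_mul v₂).const_add
      (v₁ - c * v₂ / 2)
    rw [show v₁ - c * v₂ / 2 + v₂ * (c / 2 + x) = v₁ + v₂ * x by ring] at h
    refine h.congr' ?_
    filter_upwards [self_mem_nhdsWithin] with ε (hε : ε ≠ 0)
    field_simp
    ring
  rw [add_mul]
  exact tendsto_add_div_mul_add_sub_div_mul self_mem_nhdsWithin hα hβ hαβ a₀ b₀ A

theorem pointwise_contraction_of_representations_general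
    (A B a₀ b₀ : ℝ) (hab : a₀ + b₀ = B)
    (f : ℝ → ℂ) (x c v₁ v₂ : ℝ) :
    Filter.Tendsto (fun ε : ℝ =>
        Complex.exp (Complex.I * Complex.ofReal ((a₀ + A / ε) * (v₂ + ε * (v₁ - c * v₂ / 2)))) *
        Complex.exp (Complex.I * Complex.ofReal ((b₀ - A / ε) * v₂ * Dfun ε c * Real.exp (-(ε * x)))) *
        f (c + x))
      (𝓝[>] (0:ℝ))
      (𝓝 (Complex.exp (Complex.I * Complex.ofReal (B * v₂ + A * (v₁ + v₂ * x))) * f (c + x))) := by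
  have hphase := (tendsto_contraction_phase A a₀ b₀ x c v₁ v₂).mono_left (nhdsGT_le_nhdsNE 0)
  rw [hab] at hphase
  have hcont : Continuous fun r : ℝ => Complex.exp (Complex.I * r) := by fun_prop
  refine (((hcont.tendsto _).comp hphase).mul_const (f (c + x))).congr fun ε => ?_
  rw [Function.comp_apply, ← Complex.exp_add]
  push_cast
  ring_nf

theorem pointwise_contraction_of_representations
    (A B a₀ b₀ : ℝ) (hA : A ≠ 0) (hab : a₀ + b₀ = B)
    (f : ℝ → ℂ) (x c v₁ v₂ : ℝ) :
    Filter.Tendsto (fun ε : ℝ =>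
        Complex.exp (Complex.I * Complex.ofReal ((a₀ + A / ε) * (v₂ + ε * (v₁ - c * v₂ / 2)))) *
        Complex.exp (Complex.I * Complex.ofReal ((b₀ - A / ε) * v₂ * Dfun ε c * Real.exp (-(ε * x)))) *
        f (c + x))
      (𝓝[>] (0:ℝ))
      (𝓝 (Complex.exp (Complex.I * Complex.ofReal (B * v₂ + A * (v₁ + v₂ * x))) * f (c + x))) :=
  pointwise_contraction_of_representations_general A B a₀ b₀ hab f x c v₁ v₂
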